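/- arXiv:1505.04764 — 6 statements merged into one kernel-verified Lean document; each statement's English description precedes it below -/
import Mathlib

section
/- Let γ ∈ ℝ, b > 0, and 1 ≤ α < β. Set m = max(α^γ, β^γ), r = 2 + 2bm, and λ̂ = exp(−r(β−α)), and define u(x) = 2 − exp(−r(x−α)) for x ∈ [α, β]. Then u(α) = 1, 1 ≤ u(x) ≤ 2 on [α, β], u'(β) > 0, and for every λ with 0 ≤ λ ≤ λ̂ one has (1/2)u''(x) + b x^γ u'(x) + λ u(x) ≤ 0 for all x ∈ [α, β]. -/
open Real Set

/-!
`u` is a barrier: with `E = exp (-r (x - α)) ∈ [λ̂, 1]` one has `u' = r E` and `u'' = -r² E`,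
and bounding `x ^ γ` by `m` on `[α, β]` turns `½ u'' + b x^γ u'` into at most `r E (b m - r / 2) = -r E`.
Since `λ u ≤ 2λ ≤ 2E` and `r ≥ 2`, the whole expression is nonpositive.
-/

lemma rpow_le_max_rpow_of_mem_Icc {a c x : ℝ} (γ : ℝ) (ha : 0 < a) (hx : x ∈ Icc a c) :
    x ^ γ ≤ max (a ^ γ) (c ^ γ) := by
  rcases le_total 0 γ with hγ | hγ
  · exact (rpow_le_rpow (ha.le.trans hx.1) hx.2 hγ).trans (le_max_right _ _)
  · exact (rpow_le_rpow_of_nonpos ha hx.1 hγ).trans (le_max_left _ _)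

section ConstSubExp

variable (c r a : ℝ)

lemma hasDerivAt_exp_neg_mul_sub (x : ℝ) :
    HasDerivAt (fun x => exp (-r * (x - a))) (-r * exp (-r * (x - a))) x := by
  have hlin : HasDerivAt (fun x => -r * (x - a)) (-r) x := by
    simpa using ((hasDerivAt_id x).sub_const a).const_mul (-r)
  exact hlin.exp.congr_deriv (by ring)

lemma hasDerivAt_const_sub_exp_neg_mul (x : ℝ) :
    HasDerivAt (fun x => c - exp (-r * (x - a))) (r * exp (-r * (x - a))) x :=
  ((hasDerivAt_const x c).sub (hasDerivAt_exp_neg_mul_sub r a x)).congr_deriv (by ring)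

lemma deriv_const_sub_exp_neg_mul :
    deriv (fun x => c - exp (-r * (x - a))) = fun x => r * exp (-r * (x - a)) :=
  funext fun x => (hasDerivAt_const_sub_exp_neg_mul c r a x).deriv

lemma deriv_deriv_const_sub_exp_neg_mul (x : ℝ) :
    deriv (deriv fun x => c - exp (-r * (x - a))) x = -(r ^ 2) * exp (-r * (x - a)) := by
  rw [deriv_const_sub_exp_neg_mul]
  exact (((hasDerivAt_exp_neg_mul_sub r a x).const_mul r).congr_deriv (by ring)).deriv

end ConstSubExp

lemma exp_neg_mul_sub_mem_Icc {r a c x : ℝ} (hr : 0 ≤ r) (hx : x ∈ Icc a c) :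
    exp (-r * (x - a)) ∈ Icc (exp (-r * (c - a))) 1 :=
  ⟨exp_le_exp.mpr (by nlinarith [hx.2]), exp_le_one_iff.mpr (by nlinarith [hx.1])⟩

/-- The algebraic core of the barrier inequality, with `p = x ^ γ` and `E = exp (-r (x - α))`. -/
lemma barrier_ineq {b p m r E lam : ℝ} (hb : 0 ≤ b) (hm : 0 ≤ m) (hp : p ≤ m)
    (hr : r = 2 + 2 * b * m) (hE0 : 0 ≤ E) (hlam0 : 0 ≤ lam) (hlam : lam ≤ E) :
    1 / 2 * (-(r ^ 2) * E) + b * p * (r * E) + lam * (2 - E) ≤ 0 := by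
  have hrE : 0 ≤ r * E := mul_nonneg (by nlinarith) hE0
  have hdrift : b * p * (r * E) ≤ b * m * (r * E) :=
    mul_le_mul_of_nonneg_right (mul_le_mul_of_nonneg_left hp hb) hrE
  have hreaction : lam * (2 - E) ≤ 2 * E := by nlinarith
  have hcore : 1 / 2 * (-(r ^ 2) * E) + b * m * (r * E) + 2 * E = -(2 * b * m * E) := by
    subst hr; ring
  nlinarith [mul_nonneg (mul_nonneg hb hm) hE0]

theorem stmt_3_general (γ b α β : ℝ) (hb : 0 < b) (hα : 1 ≤ α)
    (m r lamhat : ℝ) (hm : m = max (α ^ γ) (β ^ γ)) (hr : r = 2 + 2 * b * m)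
    (hlamhat : lamhat = Real.exp (-r * (β - α)))
    (u : ℝ → ℝ) (hu : u = fun x => 2 - Real.exp (-r * (x - α))) :
    u α = 1 ∧
    (∀ x ∈ Icc α β, 1 ≤ u x ∧ u x ≤ 2) ∧
    0 < deriv u β ∧
    (∀ lam : ℝ, 0 ≤ lam → lam ≤ lamhat →
      ∀ x ∈ Icc α β,
        1 / 2 * deriv (deriv u) x + b * x ^ γ * deriv u x + lam * u x ≤ 0) := by
  have hα0 : 0 < α := one_pos.trans_le hα
  have hm0 : 0 ≤ m := hm ▸ (rpow_nonneg hα0.le γ).trans (le_max_left _ _)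
  have hr2 : 2 ≤ r := by nlinarith
  have hr0 : 0 ≤ r := by linarith
  subst hu
  refine ⟨by norm_num, fun x hx => ?_, ?_, fun lam hlam0 hlam x hx => ?_⟩
  · have hE := exp_neg_mul_sub_mem_Icc hr0 hx
    constructor <;> linarith [exp_pos (-r * (x - α)), hE.2]
  · rw [deriv_const_sub_exp_neg_mul]
    exact mul_pos (by linarith) (exp_pos _)
  · have hE := exp_neg_mul_sub_mem_Icc hr0 hx
    rw [deriv_deriv_const_sub_exp_neg_mul, deriv_const_sub_exp_neg_mul]
    exact barrier_ineq hb.le hm0 (hm ▸ rpow_le_max_rpow_of_mem_Icc γ hα0 hx) hr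
      (exp_pos _).le hlam0 (hlam.trans (hlamhat ▸ hE.1))

/-- For `γ ∈ ℝ`, `b > 0`, `1 ≤ α < β`, with `m = max(α^γ, β^γ)`, `r = 2 + 2bm`,
`λ̂ = exp(-r(β-α))`, the function `u(x) = 2 - exp(-r(x-α))` satisfies `u(α) = 1`,
`1 ≤ u ≤ 2` on `[α,β]`, `u'(β) > 0`, and `(1/2)u'' + b x^γ u' + λ u ≤ 0` on `[α,β]`
for every `0 ≤ λ ≤ λ̂`. -/
theorem stmt_3 (γ b α β : ℝ) (hb : 0 < b) (hα : 1 ≤ α) (hαβ : α < β)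
    (m r lamhat : ℝ) (hm : m = max (α ^ γ) (β ^ γ)) (hr : r = 2 + 2 * b * m)
    (hlamhat : lamhat = Real.exp (-r * (β - α)))
    (u : ℝ → ℝ) (hu : u = fun x => 2 - Real.exp (-r * (x - α))) :
    u α = 1 ∧
    (∀ x ∈ Icc α β, 1 ≤ u x ∧ u x ≤ 2) ∧
    0 < deriv u β ∧
    (∀ lam : ℝ, 0 ≤ lam → lam ≤ lamhat →
      ∀ x ∈ Icc α β,
        1 / 2 * deriv (deriv u) x + b * x ^ γ * deriv u x + lam * u x ≤ 0) :=
  stmt_3_general γ b α β hb hα m r lamhat hm hr hlamhat u hu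
end

section
/- Let α < β, let B : [α, β] → ℝ be continuous, and let λ ∈ ℝ. Suppose u is twice continuously differentiable on [α, β] with u(x) > 0 for all x ∈ [α, β], (1/2)u''(x) + B(x)u'(x) + λu(x) ≤ 0 on [α, β], and u'(β) ≥ 0. Suppose v is twice continuously differentiable on [α, β] with v(x) ≥ 0 on [α, β], (1/2)v''(x) + B(x)v'(x) + λv(x) = 0 on [α, β], v(α) ≤ u(α), and v'(β) = 0. Then v(x) ≤ u(x) for all x ∈ [α, β]. -/
open Real Set

/-!
With the integrating factor `e^E`, `E' = 2B`, the Wronskian `W = u v' - v u'` satisfies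
`(e^E W)' = e^E (u v'' - v u'' + 2 B W) = -2 e^E v (u''/2 + B u' + λ u) ≥ 0`,
so `e^E W` is nondecreasing and `W ≤ 0` on `[α, β]` because `W(β) = -v(β) u'(β) ≤ 0`.
Hence `(v / u)' = W / u² ≤ 0`, and `v / u ≤ v(α) / u(α) ≤ 1`.
-/

theorem ContinuousOn.exists_hasDerivWithinAt_Icc {f : ℝ → ℝ} {a b : ℝ}
    (hf : ContinuousOn f (Icc a b)) :
    ∃ F : ℝ → ℝ, ∀ x ∈ Icc a b, HasDerivWithinAt F (f x) (Icc a b) x := by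
  refine ⟨fun x => ∫ t in a..x, f t, fun x hx => ?_⟩
  have : Fact (x ∈ Icc a b) := ⟨hx⟩
  exact intervalIntegral.integral_hasDerivWithinAt_right
    (hf.mono (uIcc_subset_Icc (left_mem_Icc.mpr (hx.1.trans hx.2)) hx)).intervalIntegrable
    (hf.stronglyMeasurableAtFilter_nhdsWithin measurableSet_Icc x) (hf x hx)

theorem ContDiffOn.hasDerivWithinAt_derivWithin_two {f : ℝ → ℝ} {s : Set ℝ}
    (hf : ContDiffOn ℝ 2 f s) (hs : UniqueDiffOn ℝ s) {x : ℝ} (hx : x ∈ s) :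
    HasDerivWithinAt f (derivWithin f s x) s x ∧
      HasDerivWithinAt (derivWithin f s) (derivWithin (derivWithin f s) s x) s x :=
  ⟨(hf.differentiableOn two_ne_zero x hx).hasDerivWithinAt,
    ((hf.derivWithin hs (by norm_num : (1 : WithTop ℕ∞) + 1 ≤ 2)).differentiableOn
      one_ne_zero x hx).hasDerivWithinAt⟩

section DerivSign

variable {s : Set ℝ} {f f' : ℝ → ℝ}

theorem Convex.monotoneOn_of_hasDerivWithinAt_nonneg (hs : Convex ℝ s)
    (hf : ∀ x ∈ s, HasDerivWithinAt f (f' x) s x) (hf' : ∀ x ∈ s, 0 ≤ f' x) :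
    MonotoneOn f s :=
  _root_.monotoneOn_of_hasDerivWithinAt_nonneg hs (fun x hx => (hf x hx).continuousWithinAt)
    (fun x hx => (hf x (interior_subset hx)).mono interior_subset)
    (fun x hx => hf' x (interior_subset hx))

theorem Convex.antitoneOn_of_hasDerivWithinAt_nonpos (hs : Convex ℝ s)
    (hf : ∀ x ∈ s, HasDerivWithinAt f (f' x) s x) (hf' : ∀ x ∈ s, f' x ≤ 0) :
    AntitoneOn f s :=
  _root_.antitoneOn_of_hasDerivWithinAt_nonpos hs (fun x hx => (hf x hx).continuousWithinAt)
    (fun x hx => (hf x (interior_subset hx)).mono interior_subset)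
    (fun x hx => hf' x (interior_subset hx))

end DerivSign

section Wronskian

variable {s : Set ℝ} {u v u' v' : ℝ → ℝ}

theorem monotoneOn_exp_mul_wronskian {B E u'' v'' : ℝ → ℝ} {lam : ℝ} (hs : Convex ℝ s)
    (hE : ∀ x ∈ s, HasDerivWithinAt E (2 * B x) s x)
    (hu : ∀ x ∈ s, HasDerivWithinAt u (u' x) s x)
    (hu' : ∀ x ∈ s, HasDerivWithinAt u' (u'' x) s x)
    (hv : ∀ x ∈ s, HasDerivWithinAt v (v' x) s x)
    (hv' : ∀ x ∈ s, HasDerivWithinAt v' (v'' x) s x)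
    (hsuper : ∀ x ∈ s, 1 / 2 * u'' x + B x * u' x + lam * u x ≤ 0)
    (hsol : ∀ x ∈ s, 1 / 2 * v'' x + B x * v' x + lam * v x = 0)
    (hv₀ : ∀ x ∈ s, 0 ≤ v x) :
    MonotoneOn (fun x => exp (E x) * (u x * v' x - v x * u' x)) s := by
  refine hs.monotoneOn_of_hasDerivWithinAt_nonneg (f' := fun x =>
    exp (E x) * (2 * B x) * (u x * v' x - v x * u' x) +
      exp (E x) * (u' x * v' x + u x * v'' x - (v' x * u' x + v x * u'' x)))
    (fun x hx => ?_) (fun x hx => ?_)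
  · exact (hE x hx).exp.mul (((hu x hx).mul (hv' x hx)).sub ((hv x hx).mul (hu' x hx)))
  · have key : exp (E x) * (2 * B x) * (u x * v' x - v x * u' x) +
        exp (E x) * (u' x * v' x + u x * v'' x - (v' x * u' x + v x * u'' x)) =
        2 * exp (E x) * (u x * (1 / 2 * v'' x + B x * v' x + lam * v x) -
          v x * (1 / 2 * u'' x + B x * u' x + lam * u x)) := by ring
    rw [key, hsol x hx, mul_zero, zero_sub, mul_neg, neg_nonneg]
    exact mul_nonpos_of_nonneg_of_nonpos (by positivity)
      (mul_nonpos_of_nonneg_of_nonpos (hv₀ x hx) (hsuper x hx))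

theorem antitoneOn_div_of_wronskian_nonpos (hs : Convex ℝ s)
    (hu : ∀ x ∈ s, HasDerivWithinAt u (u' x) s x)
    (hv : ∀ x ∈ s, HasDerivWithinAt v (v' x) s x)
    (hu₀ : ∀ x ∈ s, 0 < u x) (hW : ∀ x ∈ s, u x * v' x - v x * u' x ≤ 0) :
    AntitoneOn (fun x => v x / u x) s :=
  hs.antitoneOn_of_hasDerivWithinAt_nonpos
    (fun x hx => (hv x hx).div (hu x hx) (hu₀ x hx).ne')
    (fun x hx => div_nonpos_of_nonpos_of_nonneg (by linarith [hW x hx]) (sq_nonneg _))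

end Wronskian

/-- Generalized maximum principle: if `u` is a positive C² supersolution of
`(1/2)u'' + B u' + λ u ≤ 0` on `[α,β]` with `u'(β) ≥ 0`, and `v` is a nonnegative C²
solution of `(1/2)v'' + B v' + λ v = 0` on `[α,β]` with `v(α) ≤ u(α)` and `v'(β) = 0`,
then `v ≤ u` on `[α,β]`. -/
theorem stmt_5 (α β lam : ℝ) (hαβ : α < β) (B : ℝ → ℝ)
    (hB : ContinuousOn B (Icc α β))
    (u v : ℝ → ℝ)
    (hu2 : ContDiffOn ℝ 2 u (Icc α β))
    (hupos : ∀ x ∈ Icc α β, 0 < u x)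
    (husuper : ∀ x ∈ Icc α β,
      1 / 2 * derivWithin (derivWithin u (Icc α β)) (Icc α β) x +
        B x * derivWithin u (Icc α β) x + lam * u x ≤ 0)
    (hub : 0 ≤ derivWithin u (Icc α β) β)
    (hv2 : ContDiffOn ℝ 2 v (Icc α β))
    (hvnonneg : ∀ x ∈ Icc α β, 0 ≤ v x)
    (hvsol : ∀ x ∈ Icc α β,
      1 / 2 * derivWithin (derivWithin v (Icc α β)) (Icc α β) x +
        B x * derivWithin v (Icc α β) x + lam * v x = 0)
    (hvα : v α ≤ u α)
    (hvb : derivWithin v (Icc α β) β = 0) :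
    ∀ x ∈ Icc α β, v x ≤ u x := by
  have hK : UniqueDiffOn ℝ (Icc α β) := uniqueDiffOn_Icc hαβ
  have hαK : α ∈ Icc α β := left_mem_Icc.mpr hαβ.le
  have hβK : β ∈ Icc α β := right_mem_Icc.mpr hαβ.le
  obtain ⟨E, hE⟩ := (continuousOn_const.mul hB).exists_hasDerivWithinAt_Icc
  have hu x hx := hu2.hasDerivWithinAt_derivWithin_two hK (x := x) hx
  have hv x hx := hv2.hasDerivWithinAt_derivWithin_two hK (x := x) hx
  have hmono := monotoneOn_exp_mul_wronskian (convex_Icc α β) hE (fun x hx => (hu x hx).1)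
    (fun x hx => (hu x hx).2) (fun x hx => (hv x hx).1) (fun x hx => (hv x hx).2)
    husuper hvsol hvnonneg
  have hWβ : u β * derivWithin v (Icc α β) β - v β * derivWithin u (Icc α β) β ≤ 0 := by
    rw [hvb, mul_zero, zero_sub, neg_nonpos]
    exact mul_nonneg (hvnonneg β hβK) hub
  have hW : ∀ x ∈ Icc α β,
      u x * derivWithin v (Icc α β) x - v x * derivWithin u (Icc α β) x ≤ 0 := fun x hx =>
    nonpos_of_mul_nonpos_right ((hmono hx hβK hx.2).trans
      (mul_nonpos_of_nonneg_of_nonpos (exp_pos _).le hWβ)) (exp_pos _)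
  have hanti := antitoneOn_div_of_wronskian_nonpos (convex_Icc α β) (fun x hx => (hu x hx).1)
    (fun x hx => (hv x hx).1) hupos hW
  intro x hx
  rw [← div_le_one (hupos x hx)]
  exact (hanti hαK hx hx.1).trans ((div_le_one (hupos α hαK)).mpr hvα)
end

section
/- Fix λ > 0 and for D > 0 define E(D) = 2√(D²+2λ) e^{−2D} / ((−D+√(D²+2λ)) e^{−D+√(D²+2λ)} + (D+√(D²+2λ)) e^{−D−√(D²+2λ)}). Then lim_{D→∞} E(D) · (λ e^{2D})/(2D²) = 1; that is, E(D) ∼ (2D²/λ) e^{−2D} as D → ∞. -/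
open Real Filter Topology

/-!
Write `s = √(D² + 2λ)`, so that `(s - D)(s + D) = 2λ`. Multiplying the denominator of `E(D)` by
`s + D` turns it into `2λ e^{s-D} + (s+D)² e^{-(s+D)}`, and then
`E(D) λ e^{2D} / (2D²) = λ (s/D) (s/D + 1) / (2λ e^{s-D} + (s+D)² e^{-(s+D)})`.
Since `s - D = 2λ / (s + D) → 0` and `s + D → ∞`, this tends to `λ · 1 · 2 / (2λ) = 1`.
-/

lemma tendsto_sqrt_sq_add_add_self_atTop (c : ℝ) :
    Tendsto (fun x => √(x ^ 2 + c) + x) atTop atTop :=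
  tendsto_atTop_mono (fun _ => le_add_of_nonneg_left (sqrt_nonneg _)) tendsto_id

lemma tendsto_sqrt_sq_add_sub_self_zero (c : ℝ) :
    Tendsto (fun x => √(x ^ 2 + c) - x) atTop (𝓝 0) := by
  refine ((tendsto_const_nhds (x := c)).div_atTop (tendsto_sqrt_sq_add_add_self_atTop c)).congr' ?_
  filter_upwards [(tendsto_sqrt_sq_add_add_self_atTop c).eventually_gt_atTop 0,
    (tendsto_pow_atTop two_ne_zero).eventually_ge_atTop (-c)] with x hpos hx
  rw [div_eq_iff hpos.ne']
  linear_combination -sq_sqrt (by linarith : 0 ≤ x ^ 2 + c)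

lemma tendsto_sqrt_sq_add_div_self_one (c : ℝ) :
    Tendsto (fun x => √(x ^ 2 + c) / x) atTop (𝓝 1) := by
  have h := ((tendsto_sqrt_sq_add_sub_self_zero c).mul tendsto_inv_atTop_zero).const_add 1
  rw [mul_zero, add_zero] at h
  refine h.congr' ?_
  filter_upwards [eventually_gt_atTop 0] with x hx
  field_simp
  ring

lemma tendsto_sq_mul_exp_neg_sqrt_sq_add_add_self (c : ℝ) :
    Tendsto (fun x => (√(x ^ 2 + c) + x) ^ 2 * exp (-(√(x ^ 2 + c) + x))) atTop (𝓝 0) :=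
  (tendsto_pow_mul_exp_neg_atTop_nhds_zero 2).comp (tendsto_sqrt_sq_add_add_self_atTop c)

lemma add_mul_denominator_eq {c D s : ℝ} (hs : s ^ 2 = D ^ 2 + c) :
    (s + D) * ((-D + s) * exp (-D + s) + (D + s) * exp (-D - s)) =
      c * exp (s - D) + (s + D) ^ 2 * exp (-(s + D)) := by
  rw [show -D + s = s - D by ring, show -D - s = -(s + D) by ring]
  linear_combination exp (s - D) * hs

/-- For fixed `λ > 0`, the quantity
`E(D) = 2√(D²+2λ) e^{-2D} / ((-D+√(D²+2λ)) e^{-D+√(D²+2λ)} + (D+√(D²+2λ)) e^{-D-√(D²+2λ)})`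
satisfies `E(D) ∼ (2D²/λ) e^{-2D}` as `D → ∞`. -/
theorem stmt_6 (lam : ℝ) (hlam : 0 < lam)
    (E : ℝ → ℝ)
    (hE : E = fun D => 2 * Real.sqrt (D ^ 2 + 2 * lam) * Real.exp (-2 * D) /
      ((-D + Real.sqrt (D ^ 2 + 2 * lam)) * Real.exp (-D + Real.sqrt (D ^ 2 + 2 * lam)) +
        (D + Real.sqrt (D ^ 2 + 2 * lam)) * Real.exp (-D - Real.sqrt (D ^ 2 + 2 * lam)))) :
    Tendsto (fun D : ℝ => E D * (lam * Real.exp (2 * D)) / (2 * D ^ 2))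
      atTop (nhds 1) := by
  have hden : Tendsto (fun D => 2 * lam * exp (√(D ^ 2 + 2 * lam) - D) +
      (√(D ^ 2 + 2 * lam) + D) ^ 2 * exp (-(√(D ^ 2 + 2 * lam) + D))) atTop (𝓝 (2 * lam)) := by
    simpa using (((continuous_exp.tendsto 0).comp
      (tendsto_sqrt_sq_add_sub_self_zero _)).const_mul (2 * lam)).add
      (tendsto_sq_mul_exp_neg_sqrt_sq_add_add_self _)
  have hratio := tendsto_sqrt_sq_add_div_self_one (2 * lam)
  have hlim := ((hratio.const_mul lam).mul (hratio.add_const 1)).div hden (by positivity)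
  rw [show lam * 1 * (1 + 1) / (2 * lam) = 1 by field_simp; ring] at hlim
  refine hlim.congr' ?_
  filter_upwards [eventually_gt_atTop 0] with D hD
  simp only [hE, Pi.div_apply]
  set s := √(D ^ 2 + 2 * lam)
  have hs : s ^ 2 = D ^ 2 + 2 * lam := sq_sqrt (by positivity)
  have hDs : D < s := by nlinarith [sqrt_nonneg (D ^ 2 + 2 * lam)]
  have hQ : 0 < (-D + s) * exp (-D + s) + (D + s) * exp (-D - s) := by
    have : 0 < -D + s := by linarith
    positivity
  have hsD : 0 < s + D := by linarith
  rw [← add_mul_denominator_eq hs, neg_mul, exp_neg]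
  field_simp
end

section
/- Let γ > −1 and b, c > 0, and set f_j = c·j^{1/(1+γ)} for positive integers j. Then there exist K₀ ∈ (0, 1) and J ∈ ℕ such that φ(f_{j+1}) ≤ K₀ · φ(f_j) for all j ≥ J. -/
/-! With `p = 1 + γ` and `a = 2b/p`, the substitution `t = l s` (`l ≥ 1`) gives
`∫_{l x}^∞ e^{-a t^p} dt = l ∫_x^∞ e^{-a l^p s^p} ds ≤ l e^{-a (l^p - 1) x^p} ∫_x^∞ e^{-a s^p} ds`.
Taking `x = f_j` and `l = (1 + 1/j)^{1/p}`, so that `l x = f_{j+1}` and `(l^p - 1) x^p = c^p`, yields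
`φ(f_{j+1}) ≤ (1 + 1/j)^{1/p} e^{-a c^p} φ(f_j)`, and the prefactor `(1 + 1/j)^{1/p}` tends to `1`. -/

open Real Set MeasureTheory Filter Topology

section

variable {a p : ℝ}

theorem integrableOn_exp_neg_mul_rpow_Ioi (ha : 0 < a) (hp : 0 < p) {x : ℝ} (hx : 0 ≤ x) :
    IntegrableOn (fun t : ℝ => exp (-a * t ^ p)) (Ioi x) := by
  have h := (integrableOn_rpow_mul_exp_neg_mul_rpow (s := 0) (by norm_num) hp ha).mono_set
    (Ioi_subset_Ioi hx)
  exact h.congr_fun (fun _ _ => by simp) measurableSet_Ioi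

theorem integral_Ioi_exp_neg_mul_rpow_mul_le (ha : 0 < a) (hp : 0 < p) {x l : ℝ} (hx : 0 ≤ x)
    (hl : 1 ≤ l) :
    ∫ t in Ioi (l * x), exp (-a * t ^ p) ≤
      l * exp (-a * (l ^ p - 1) * x ^ p) * ∫ t in Ioi x, exp (-a * t ^ p) := by
  have hl0 : 0 < l := one_pos.trans_le hl
  have hpt : ∀ t ∈ Ioi x, exp (-a * (l * t) ^ p) ≤
      exp (-a * (l ^ p - 1) * x ^ p) * exp (-a * t ^ p) := by
    intro t ht
    have hxt : x ^ p ≤ t ^ p := rpow_le_rpow hx (le_of_lt ht) hp.le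
    have hlp : 1 ≤ l ^ p := one_le_rpow hl hp.le
    rw [← exp_add, exp_le_exp, mul_rpow hl0.le (hx.trans (le_of_lt ht))]
    nlinarith [mul_nonneg (mul_nonneg ha.le (sub_nonneg.2 hlp)) (sub_nonneg.2 hxt)]
  rw [← integral_comp_mul_left_Ioi' _ _ hl0, smul_eq_mul, mul_assoc,
    ← integral_const_mul (exp (-a * (l ^ p - 1) * x ^ p))]
  refine mul_le_mul_of_nonneg_left (integral_mono_of_nonneg (.of_forall fun t => (exp_pos _).le)
    ((integrableOn_exp_neg_mul_rpow_Ioi ha hp hx).const_mul _) ?_) hl0.le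
  exact (ae_restrict_iff' measurableSet_Ioi).2 (.of_forall hpt)

theorem integral_Ioi_exp_neg_mul_rpow_succ_le (ha : 0 < a) (hp : 0 < p) {c u : ℝ} (hc : 0 < c)
    (hu : 0 < u) :
    ∫ t in Ioi (c * (u + 1) ^ (1 / p)), exp (-a * t ^ p) ≤
      (1 + 1 / u) ^ (1 / p) * exp (-a * c ^ p) * ∫ t in Ioi (c * u ^ (1 / p)), exp (-a * t ^ p) := by
  have hl : 1 ≤ (1 + 1 / u) ^ (1 / p) := one_le_rpow (by simp [hu.le]) (by positivity)
  have hx : 0 ≤ c * u ^ (1 / p) := by positivity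
  convert integral_Ioi_exp_neg_mul_rpow_mul_le ha hp hx hl using 3
  · rw [mul_left_comm, ← mul_rpow (by positivity) hu.le, add_mul, one_div_mul_cancel hu.ne',
      one_mul]
  · rw [← rpow_mul (by positivity), mul_rpow hc.le (by positivity), ← rpow_mul hu.le,
      one_div_mul_cancel hp.ne', rpow_one, rpow_one, add_sub_cancel_left]
    field_simp

end

theorem tendsto_one_add_one_div_nat_rpow_nhds_one (q : ℝ) :
    Tendsto (fun j : ℕ => (1 + 1 / (j : ℝ)) ^ q) atTop (𝓝 1) := by
  simpa using (tendsto_one_div_atTop_nhds_zero_nat.const_add (1 : ℝ)).rpow_const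
    (p := q) (Or.inl (by norm_num))

/-- For `γ > -1`, `b, c > 0`, with `φ(x) = ∫_x^∞ exp(-(2b/(1+γ)) t^{1+γ}) dt` and
`f_j = c j^{1/(1+γ)}`, there exist `K₀ ∈ (0,1)` and `J ∈ ℕ` such that
`φ(f_{j+1}) ≤ K₀ φ(f_j)` for all `j ≥ J`. -/
theorem stmt_10 (γ b c : ℝ) (hγ : -1 < γ) (hb : 0 < b) (hc : 0 < c)
    (φ : ℝ → ℝ)
    (hφ : φ = fun x => ∫ t in Ioi x, Real.exp (-(2 * b / (1 + γ)) * t ^ (1 + γ)))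
    (f : ℕ → ℝ) (hf : f = fun j : ℕ => c * (j : ℝ) ^ (1 / (1 + γ))) :
    ∃ K₀ ∈ Set.Ioo (0 : ℝ) 1, ∃ J : ℕ, ∀ j : ℕ, J ≤ j →
      φ (f (j + 1)) ≤ K₀ * φ (f j) := by
  subst hφ hf
  set p := 1 + γ
  set a := 2 * b / p
  have hp : 0 < p := by linarith
  have ha : 0 < a := by positivity
  have hκ : 0 < a * c ^ p := by positivity
  have hsmall : ∀ᶠ j : ℕ in atTop, (1 + 1 / (j : ℝ)) ^ (1 / p) ≤ exp (a * c ^ p / 2) :=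
    (tendsto_one_add_one_div_nat_rpow_nhds_one _).eventually_le_const
      (one_lt_exp_iff.2 (half_pos hκ))
  obtain ⟨J, hJ⟩ := (hsmall.and (eventually_gt_atTop 0)).exists_forall_of_atTop
  refine ⟨exp (-(a * c ^ p) / 2), ⟨exp_pos _, exp_lt_one_iff.2 (by linarith)⟩, J, fun j hj => ?_⟩
  obtain ⟨hjsmall, hjpos⟩ := hJ j hj
  have hφ_nonneg : 0 ≤ ∫ t in Ioi (c * (j : ℝ) ^ (1 / p)), exp (-a * t ^ p) :=
    setIntegral_nonneg measurableSet_Ioi fun t _ => (exp_pos _).le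
  calc ∫ t in Ioi (c * ((j + 1 : ℕ) : ℝ) ^ (1 / p)), exp (-a * t ^ p)
      ≤ (1 + 1 / (j : ℝ)) ^ (1 / p) * exp (-a * c ^ p) *
          ∫ t in Ioi (c * (j : ℝ) ^ (1 / p)), exp (-a * t ^ p) := by
        push_cast
        exact integral_Ioi_exp_neg_mul_rpow_succ_le ha hp hc (Nat.cast_pos.2 hjpos)
    _ ≤ exp (a * c ^ p / 2) * exp (-a * c ^ p) *
          ∫ t in Ioi (c * (j : ℝ) ^ (1 / p)), exp (-a * t ^ p) := by gcongr
    _ = exp (-(a * c ^ p) / 2) * ∫ t in Ioi (c * (j : ℝ) ^ (1 / p)), exp (-a * t ^ p) := by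
        rw [← exp_add]
        ring_nf
end

section
/- Let γ > −1, b > 0, and a > 0. Then lim_{t→∞} φ(a(log t)^{1/(1+γ)}) · 2b · (a(log t)^{1/(1+γ)})^{γ} · t^{2ba^{1+γ}/(1+γ)} = 1; that is, φ(a(log t)^{1/(1+γ)}) ∼ (1/(2b))(a(log t)^{1/(1+γ)})^{−γ} · t^{−2ba^{1+γ}/(1+γ)} as t → ∞. -/
open Real Set Filter MeasureTheory

/-! With `p = 1 + γ`, `c = 2b/p` and `x = a (log t)^{1/p}` one has `t^{2b a^p / p} = exp (c x^p)`,
so the claim is the tail asymptotic `∫_x^∞ exp (-c t^p) dt ∼ exp (-c x^p) x^{1-p} / (c p)`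
as `x → ∞`. Both sides tend to `0`, and the ratio of their derivatives is
`(1 + (p - 1)/(c p) x^{-p})⁻¹ → 1`, so this follows from L'Hôpital's rule. -/

theorem hasDerivAt_integral_Ioi {E : Type*} [NormedAddCommGroup E] [NormedSpace ℝ E]
    [CompleteSpace E] {f : ℝ → E} {a x : ℝ} (hf : IntegrableOn f (Ioi a))
    (hmeas : StronglyMeasurableAtFilter f (nhds x)) (hcont : ContinuousAt f x) (hax : a < x) :
    HasDerivAt (fun y => ∫ t in Ioi y, f t) (-f x) x := by
  have htail : ∀ y, a ≤ y → ∫ t in Ioi y, f t = (∫ t in Ioi a, f t) - ∫ t in a..y, f t :=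
    fun y hy => eq_sub_of_add_eq' <|
      intervalIntegral.integral_interval_add_Ioi hf (hf.mono_set (Ioi_subset_Ioi hy))
  have hint : IntervalIntegrable f volume a x :=
    (intervalIntegrable_iff_integrableOn_Ioc_of_le hax.le).2 (hf.mono_set Ioc_subset_Ioi_self)
  refine ((intervalIntegral.integral_hasDerivAt_right hint hmeas hcont).const_sub
    (∫ t in Ioi a, f t)).congr_of_eventuallyEq ?_
  filter_upwards [eventually_gt_nhds hax] with y hy using htail y hy.le

section

variable {c p : ℝ}

theorem integrableOn_Ioi_exp_neg_mul_rpow (hc : 0 < c) (hp : 0 < p) {x : ℝ} (hx : 0 ≤ x) :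
    IntegrableOn (fun t => exp (-c * t ^ p)) (Ioi x) := by
  have := integrableOn_rpow_mul_exp_neg_mul_rpow (s := 0) (by norm_num) hp hc
  simp only [rpow_zero, one_mul] at this
  exact this.mono_set (Ioi_subset_Ioi hx)

theorem hasDerivAt_exp_neg_mul_rpow_mul_rpow_div (hc : c ≠ 0) (hp : p ≠ 0) {x : ℝ} (hx : 0 < x) :
    HasDerivAt (fun y => exp (-c * y ^ p) * y ^ (1 - p) / (c * p))
      (-exp (-c * x ^ p) * (1 + (p - 1) / (c * p) * x ^ (-p))) x := by
  have hexp := ((hasDerivAt_rpow_const (p := p) (Or.inl hx.ne')).const_mul (-c)).exp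
  have hpow := hasDerivAt_rpow_const (p := 1 - p) (Or.inl hx.ne')
  refine ((hexp.mul hpow).div_const (c * p)).congr_deriv ?_
  have hcancel : x ^ (p - 1) * x ^ (1 - p) = 1 := by rw [← rpow_add hx]; norm_num
  rw [show 1 - p - 1 = -p by ring]
  field_simp
  linear_combination (-(c * p)) * hcancel

theorem tendsto_exp_neg_mul_rpow_mul_rpow_div_atTop (hc : 0 < c) (hp : 0 < p) :
    Tendsto (fun x => exp (-c * x ^ p) * x ^ (1 - p) / (c * p)) atTop (nhds 0) := by
  have h := ((tendsto_rpow_mul_exp_neg_mul_atTop_nhds_zero ((1 - p) / p) c hc).comp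
    (tendsto_rpow_atTop hp)).div_const (c * p)
  rw [zero_div] at h
  refine h.congr' ?_
  filter_upwards [eventually_gt_atTop 0] with x hx
  rw [Function.comp_apply, ← rpow_mul hx.le, mul_div_cancel₀ _ hp.ne', mul_comm]

theorem tendsto_integral_Ioi_exp_neg_mul_rpow_div (hc : 0 < c) (hp : 0 < p) :
    Tendsto (fun x => (∫ t in Ioi x, exp (-c * t ^ p)) /
      (exp (-c * x ^ p) * x ^ (1 - p) / (c * p))) atTop (nhds 1) := by
  have hcont : Continuous fun t : ℝ => exp (-c * t ^ p) :=
    continuous_exp.comp (continuous_const.mul (continuous_rpow_const hp.le))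
  have hfactor : Tendsto (fun x : ℝ => 1 + (p - 1) / (c * p) * x ^ (-p)) atTop (nhds 1) := by
    simpa using ((tendsto_rpow_neg_atTop hp).const_mul ((p - 1) / (c * p))).const_add 1
  refine HasDerivAt.lhopital_zero_atTop (f' := fun x => -exp (-c * x ^ p))
    (g' := fun x => -exp (-c * x ^ p) * (1 + (p - 1) / (c * p) * x ^ (-p))) ?_ ?_ ?_
    (tendsto_integral_Ioi_zero tendsto_id) (tendsto_exp_neg_mul_rpow_mul_rpow_div_atTop hc hp) ?_
  · filter_upwards [eventually_gt_atTop 0] with x hx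
    exact hasDerivAt_integral_Ioi (integrableOn_Ioi_exp_neg_mul_rpow hc hp le_rfl)
      (hcont.stronglyMeasurableAtFilter _ _) hcont.continuousAt hx
  · filter_upwards [eventually_gt_atTop 0] with x hx
    exact hasDerivAt_exp_neg_mul_rpow_mul_rpow_div hc.ne' hp.ne' hx
  · filter_upwards [hfactor.eventually_ne one_ne_zero] with x hx
    exact mul_ne_zero (neg_ne_zero.2 (exp_ne_zero _)) hx
  · have hinv := hfactor.inv₀ one_ne_zero
    rw [inv_one] at hinv
    refine hinv.congr fun x => ?_
    rw [div_mul_cancel_left₀ (neg_ne_zero.2 (exp_ne_zero _))]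

theorem tendsto_integral_Ioi_exp_neg_mul_rpow_mul (hc : 0 < c) (hp : 0 < p) :
    Tendsto (fun x => (∫ t in Ioi x, exp (-c * t ^ p)) * (c * p) * x ^ (p - 1) *
      exp (c * x ^ p)) atTop (nhds 1) := by
  refine (tendsto_integral_Ioi_exp_neg_mul_rpow_div hc hp).congr' ?_
  filter_upwards [eventually_gt_atTop 0] with x hx
  have hpow : x ^ (1 - p) = (x ^ (p - 1))⁻¹ := by rw [← rpow_neg hx.le, neg_sub]
  rw [hpow, neg_mul, exp_neg]
  field_simp

end

/-- For `γ > -1`, `b > 0`, `a > 0`, with `φ(x) = ∫_x^∞ exp(-(2b/(1+γ)) t^{1+γ}) dt`: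
`φ(a (log t)^{1/(1+γ)}) ∼ (1/(2b)) (a (log t)^{1/(1+γ)})^{-γ} t^{-2ba^{1+γ}/(1+γ)}`
as `t → ∞`. -/
theorem stmt_12 (γ b a : ℝ) (hγ : -1 < γ) (hb : 0 < b) (ha : 0 < a)
    (φ : ℝ → ℝ)
    (hφ : φ = fun x => ∫ t in Ioi x, Real.exp (-(2 * b / (1 + γ)) * t ^ (1 + γ))) :
    Tendsto (fun t : ℝ =>
        φ (a * Real.log t ^ (1 / (1 + γ))) * (2 * b) *
          (a * Real.log t ^ (1 / (1 + γ))) ^ γ * t ^ (2 * b * a ^ (1 + γ) / (1 + γ)))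
      atTop (nhds 1) := by
  have hp : 0 < 1 + γ := by linarith
  have hx : Tendsto (fun t => a * log t ^ (1 / (1 + γ))) atTop atTop :=
    ((tendsto_rpow_atTop (by positivity)).comp tendsto_log_atTop).const_mul_atTop ha
  have hc : 0 < 2 * b / (1 + γ) := by positivity
  refine ((tendsto_integral_Ioi_exp_neg_mul_rpow_mul hc hp).comp hx).congr' ?_
  filter_upwards [eventually_gt_atTop 1] with t ht
  have hlog : 0 < log t := log_pos ht
  have hxp : (a * log t ^ (1 / (1 + γ))) ^ (1 + γ) = a ^ (1 + γ) * log t := by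
    rw [mul_rpow ha.le (by positivity), ← rpow_mul hlog.le, one_div_mul_cancel hp.ne', rpow_one]
  have ht_pow : t ^ (2 * b * a ^ (1 + γ) / (1 + γ)) =
      exp (2 * b / (1 + γ) * (a * log t ^ (1 / (1 + γ))) ^ (1 + γ)) := by
    rw [rpow_def_of_pos (by linarith), hxp]
    ring_nf
  rw [Function.comp_apply, hφ, ht_pow, add_sub_cancel_left, div_mul_cancel₀ _ hp.ne']
end

section
/- Let γ > −1 and b, c > 0, set κ = 2bc^{1+γ}/(1+γ), and let M > 1. For positive integers j define D_j = D for some fixed D > 0 if γ ≥ 0, and D_j = b c^{γ} (j+1)^{γ/(1+γ)} if γ ∈ (−1, 0). If either κ < 1, or κ = 1 and γ ≥ −1/2, then the series ∑_{j=2}^∞ exp(−(D_j²/2) e^{j} + j^{−1/(1+γ)} (log j)^{−1} e^{κ j} log(2M)) converges. -/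
/-!
Put `t = j + 2`, and `p = 0` if `γ ≥ 0`, `p = 2γ/(1+γ)` if `γ < 0`. Since `t + 1 ≤ 2t` and
`p ≤ 0`, `D_j²/2 ≥ a t^p` for some `a > 0`. The positive part of the exponent,
`t^{-1/(1+γ)} (log t)⁻¹ e^{κt} log(2M)`, is `o(t^p e^t)`: for `κ < 1` the exponential gap wins,
and for `κ = 1` the condition `γ ≥ -1/2` gives `-1/(1+γ) ≤ p`, so the factor `(log t)⁻¹` wins.
As also `t = o(t^p e^t)`, the exponent is eventually at most `-t`, and the series is dominated
by `∑ e^{-j}`.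
-/

open Real Filter Asymptotics

lemma isBigO_rpow_mul_exp_mul_atTop {p q κ : ℝ} (h : κ < 1 ∨ κ = 1 ∧ q ≤ p) :
    (fun t => t ^ q * exp (κ * t)) =O[atTop] fun t => t ^ p * exp t := by
  rcases h with hκ | ⟨rfl, hqp⟩
  · have hcomb := (isBigO_refl (fun t => t ^ p * exp (κ * t)) atTop).mul_isLittleO
      (isLittleO_rpow_exp_pos_mul_atTop (q - p) (sub_pos.2 hκ))
    refine hcomb.isBigO.congr' ?_ ?_ <;>
      filter_upwards [eventually_gt_atTop 0] with t ht
    · rw [mul_right_comm, ← rpow_add ht, add_sub_cancel]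
    · rw [mul_assoc, ← exp_add]; ring_nf
  · simp only [one_mul]
    refine IsBigO.mul (IsBigO.of_bound 1 ?_) (isBigO_refl _ _)
    filter_upwards [eventually_ge_atTop 1] with t ht
    rw [one_mul, norm_of_nonneg (by positivity), norm_of_nonneg (by positivity)]
    exact rpow_le_rpow_of_exponent_le ht hqp

lemma isLittleO_rpow_mul_inv_log_mul_exp_atTop {p q κ : ℝ} (h : κ < 1 ∨ κ = 1 ∧ q ≤ p) :
    (fun t => t ^ q * (log t)⁻¹ * exp (κ * t)) =o[atTop] fun t => t ^ p * exp t := by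
  have hlog : (fun t => (log t)⁻¹) =o[atTop] fun _ => (1 : ℝ) :=
    (isLittleO_one_iff ℝ).2 tendsto_log_atTop.inv_tendsto_atTop
  simpa only [mul_one, mul_right_comm _ (log _)⁻¹] using
    (isBigO_rpow_mul_exp_mul_atTop h).mul_isLittleO hlog

lemma isLittleO_id_rpow_mul_exp_atTop (p : ℝ) :
    (fun t => t) =o[atTop] fun t => t ^ p * exp t := by
  refine ((isBigO_refl (fun t => t ^ p) atTop).mul_isLittleO
    (isLittleO_rpow_exp_atTop (1 - p))).congr' ?_ .rfl
  filter_upwards [eventually_gt_atTop 0] with t ht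
  rw [← rpow_add ht, add_sub_cancel, rpow_one]

lemma eventually_neg_mul_rpow_mul_exp_add_le_neg {a p q κ : ℝ} (ha : 0 < a)
    (h : κ < 1 ∨ κ = 1 ∧ q ≤ p) (L : ℝ) :
    ∀ᶠ t in atTop, -(a * t ^ p) * exp t + t ^ q * (log t)⁻¹ * exp (κ * t) * L ≤ -t := by
  have ha2 : 0 < a / 2 := by positivity
  filter_upwards [((isLittleO_rpow_mul_inv_log_mul_exp_atTop h).const_mul_left L).def ha2,
    (isLittleO_id_rpow_mul_exp_atTop p).def ha2, eventually_gt_atTop 0] with t hg hid ht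
  have hpos : 0 < t ^ p * exp t := by positivity
  rw [norm_of_nonneg hpos.le] at hg hid
  rw [norm_of_nonneg ht.le] at hid
  have := le_norm_self (L * (t ^ q * (log t)⁻¹ * exp (κ * t)))
  linarith

lemma summable_exp_of_eventually_le_neg {f : ℕ → ℝ} (hf : ∀ᶠ n in atTop, f n ≤ -n) :
    Summable fun n => exp (f n) :=
  summable_exp_neg_nat.of_norm_bounded_eventually_nat <| by
    filter_upwards [hf] with n hn
    rw [norm_of_nonneg (exp_pos _).le]
    exact exp_le_exp.2 hn

lemma sq_mul_two_rpow_mul_rpow_le {K r t : ℝ} (hr : r ≤ 0) (ht : 1 ≤ t) :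
    K ^ 2 * 2 ^ (2 * r) * t ^ (2 * r) ≤ (K * (t + 1) ^ r) ^ 2 := by
  have ht1 : 0 < t + 1 := by linarith
  rw [mul_pow, ← rpow_mul_natCast ht1.le, mul_assoc, ← mul_rpow zero_le_two (by linarith)]
  push_cast
  rw [mul_comm r]
  exact mul_le_mul_of_nonneg_left
    (rpow_le_rpow_of_nonpos (by positivity) (by linarith) (by linarith)) (sq_nonneg K)

lemma exists_mul_rpow_le_half_sq {γ b c D : ℝ} (hγ : -1 < γ) (hb : 0 < b) (hc : 0 < c)
    (hD : 0 < D) :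
    ∃ a p, 0 < a ∧ (-1 / 2 ≤ γ → -(1 / (1 + γ)) ≤ p) ∧ ∀ t : ℝ, 1 ≤ t →
      a * t ^ p ≤ (if 0 ≤ γ then D else b * c ^ γ * (t + 1) ^ (γ / (1 + γ))) ^ 2 / 2 := by
  have h1γ : 0 < 1 + γ := by linarith
  by_cases hγ0 : 0 ≤ γ
  · refine ⟨D ^ 2 / 2, 0, by positivity, fun _ => neg_nonpos.2 (by positivity),
      fun t _ => by simp [hγ0]⟩
  · have hr : γ / (1 + γ) ≤ 0 := div_nonpos_of_nonpos_of_nonneg (by linarith) h1γ.le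
    refine ⟨(b * c ^ γ) ^ 2 * 2 ^ (2 * (γ / (1 + γ))) / 2, 2 * (γ / (1 + γ)),
      by positivity, fun h => ?_, fun t ht => ?_⟩
    · rw [neg_le, ← sub_nonneg]
      field_simp
      linarith
    · rw [if_neg hγ0]
      linarith [sq_mul_two_rpow_mul_rpow_le (K := b * c ^ γ) hr ht]

theorem stmt_14_general (γ b c D M : ℝ) (hγ : -1 < γ) (hb : 0 < b) (hc : 0 < c)
    (hD : 0 < D)
    (κ : ℝ)
    (Dj : ℕ → ℝ)
    (hDj : Dj = fun j : ℕ =>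
      if 0 ≤ γ then D else b * c ^ γ * ((j : ℝ) + 1) ^ (γ / (1 + γ)))
    (hcond : κ < 1 ∨ (κ = 1 ∧ -1/2 ≤ γ)) :
    Summable (fun j : ℕ =>
      Real.exp (-(Dj (j + 2)) ^ 2 / 2 * Real.exp ((j : ℝ) + 2) +
        ((j : ℝ) + 2) ^ (-(1 / (1 + γ))) * (Real.log ((j : ℝ) + 2))⁻¹ *
          Real.exp (κ * ((j : ℝ) + 2)) * Real.log (2 * M))) := by
  obtain ⟨a, p, ha, hp, hDa⟩ := exists_mul_rpow_le_half_sq hγ hb hc hD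
  have hcase : κ < 1 ∨ κ = 1 ∧ -(1 / (1 + γ)) ≤ p := hcond.imp_right fun h => ⟨h.1, hp h.2⟩
  have hshift : Tendsto (fun j : ℕ => (j : ℝ) + 2) atTop atTop :=
    tendsto_atTop_add_const_right _ _ tendsto_natCast_atTop_atTop
  apply summable_exp_of_eventually_le_neg
  filter_upwards [hshift.eventually
    (eventually_neg_mul_rpow_mul_exp_add_le_neg ha hcase (log (2 * M)))] with j hj
  have hDbound : a * ((j : ℝ) + 2) ^ p ≤ Dj (j + 2) ^ 2 / 2 := by
    subst hDj
    push_cast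
    exact hDa _ (by linarith)
  have hexp := mul_le_mul_of_nonneg_right hDbound (exp_pos ((j : ℝ) + 2)).le
  linarith

/-- For `γ > -1`, `b, c > 0`, `κ = 2bc^{1+γ}/(1+γ)`, `M > 1`, with `D_j = D > 0` if
`γ ≥ 0` and `D_j = b c^γ (j+1)^{γ/(1+γ)}` if `γ ∈ (-1,0)`: if `κ < 1`, or `κ = 1` and
`γ ≥ -1/2`, then `∑_{j=2}^∞ exp(-(D_j²/2) e^j + j^{-1/(1+γ)} (log j)^{-1} e^{κj} log(2M))`
converges. -/
theorem stmt_14 (γ b c D M : ℝ) (hγ : -1 < γ) (hb : 0 < b) (hc : 0 < c)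
    (hD : 0 < D) (hM : 1 < M)
    (κ : ℝ) (hκ : κ = 2 * b * c ^ (1 + γ) / (1 + γ))
    (Dj : ℕ → ℝ)
    (hDj : Dj = fun j : ℕ =>
      if 0 ≤ γ then D else b * c ^ γ * ((j : ℝ) + 1) ^ (γ / (1 + γ)))
    (hcond : κ < 1 ∨ (κ = 1 ∧ -1/2 ≤ γ)) :
    Summable (fun j : ℕ =>
      Real.exp (-(Dj (j + 2)) ^ 2 / 2 * Real.exp ((j : ℝ) + 2) +
        ((j : ℝ) + 2) ^ (-(1 / (1 + γ))) * (Real.log ((j : ℝ) + 2))⁻¹ *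
          Real.exp (κ * ((j : ℝ) + 2)) * Real.log (2 * M))) :=
  stmt_14_general γ b c D M hγ hb hc hD κ Dj hDj hcond
end
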